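/- Let V : ℤ^d → ℝ be p-periodic. Then for every 1 ≤ j ≤ P, the length of the j-th band is bounded by E_j^+ − E_j^− ≤ 4π Σ_{j=1}^{d} 1/p_j. -/

import Mathlib

noncomputable section

/-- `V : ℤ^d → ℝ` is `p`-periodic. -/
def IsPeriodic {d : ℕ} (p : Fin d → ℕ) (V : (Fin d → ℤ) → ℝ) : Prop :=
  ∀ (n : Fin d → ℤ) (j : Fin d), V (Function.update n j (n j + (p j : ℤ))) = V n

/-- Fourier coefficient `V̂(k)` for `k ∈ 𝔹`. -/
def Vhat {d : ℕ} (p : Fin d → ℕ) (V : (Fin d → ℤ) → ℝ) (k : ∀ j, Fin (p j)) : ℂ :=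
  (∏ j, (p j : ℂ))⁻¹ *
    ∑ n : ∀ j, Fin (p j),
      (V (fun j => (n j : ℤ) + 1) : ℂ) *
        Complex.exp (-(2 * Real.pi * Complex.I) *
          ∑ j, (((k j : ℕ) : ℂ) / (p j : ℂ)) * (((n j : ℕ) : ℂ) + 1))

/-- Floquet matrix `Ĥ_{p,θ}`. -/
def floquet {d : ℕ} (p : Fin d → ℕ) (V : (Fin d → ℤ) → ℝ) (θ : Fin d → ℂ) :
    Matrix (∀ j, Fin (p j)) (∀ j, Fin (p j)) ℂ :=
  fun l m =>
    (if l = m then ∑ j, 2 * Complex.cos (2 * Real.pi * (((l j : ℕ) : ℂ) / (p j : ℂ) + θ j))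
     else 0) + Vhat p V (l - m)

/-- `j`-th smallest eigenvalue (0-indexed), via real parts of roots of `det (λI - A)`. -/
def eig {I : Type*} [Fintype I] [DecidableEq I] (A : Matrix I I ℂ) (j : ℕ) : ℝ :=
  ((A.charpoly.roots.map Complex.re).sort (· ≤ ·)).getD j 0

def Vset {d : ℕ} (p : Fin d → ℕ) : Set (Fin d → ℝ) :=
  {θ | ∀ j, θ j ∈ Set.Ico (0 : ℝ) (1 / (p j : ℝ))}

def Efun {d : ℕ} (p : Fin d → ℕ) (V : (Fin d → ℤ) → ℝ) (j : ℕ) (θ : Fin d → ℝ) : ℝ :=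
  eig (floquet p V fun i => (θ i : ℂ)) j

def Eminus {d : ℕ} (p : Fin d → ℕ) (V : (Fin d → ℤ) → ℝ) (j : ℕ) : ℝ :=
  sInf (Efun p V j '' Vset p)

def Eplus {d : ℕ} (p : Fin d → ℕ) (V : (Fin d → ℤ) → ℝ) (j : ℕ) : ℝ :=
  sSup (Efun p V j '' Vset p)

/-- The bands of `Δ + V` are `δ`-overlapping. -/
def Overlapping {d : ℕ} (p : Fin d → ℕ) (V : (Fin d → ℤ) → ℝ) (δ : ℝ) : Prop :=
  ∀ j : ℕ, j + 1 < ∏ i, p i → Eplus p V j - Eminus p V (j + 1) ≥ δ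

section AuxWeyl

open Matrix Polynomial

variable {ι : Type*} [Fintype ι] [DecidableEq ι]

lemma charpoly_unitary_conj (U : Matrix.unitaryGroup ι ℂ) (D : Matrix ι ι ℂ) :
    Matrix.charpoly ((U : Matrix ι ι ℂ) * D * star (U : Matrix ι ι ℂ)) = D.charpoly := by
  have hU : (U : Matrix ι ι ℂ) * star (U : Matrix ι ι ℂ) = 1 :=
    Matrix.mem_unitaryGroup_iff.mp U.2
  set mc : Matrix ι ι ℂ →+* Matrix ι ι ℂ[X] := (C : ℂ →+* ℂ[X]).mapMatrix with hmc
  have hcm : charmatrix ((U : Matrix ι ι ℂ) * D * star (U : Matrix ι ι ℂ))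
      = mc (U : Matrix ι ι ℂ) * charmatrix D * mc (star (U : Matrix ι ι ℂ)) := by
    rw [charmatrix, charmatrix, mul_sub, sub_mul]
    congr 1
    · symm
      rw [(Matrix.scalar_commute (X : ℂ[X]) (fun r' => Commute.all _ _) (mc (U : Matrix ι ι ℂ))).symm.eq,
        mul_assoc, ← _root_.map_mul, hU, _root_.map_one, mul_one]
    · rw [_root_.map_mul, _root_.map_mul]
  have hdet : (mc (U : Matrix ι ι ℂ)).det * (mc (star (U : Matrix ι ι ℂ))).det = 1 := by
    rw [← det_mul, ← _root_.map_mul, hU, _root_.map_one, det_one]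
  rw [Matrix.charpoly, Matrix.charpoly, hcm, det_mul, det_mul]
  ring_nf
  rw [mul_comm, ← mul_assoc]
  rw [mul_comm (mc (star (U : Matrix ι ι ℂ))).det (mc (U:Matrix ι ι ℂ)).det] 
  rw [hdet, one_mul]

lemma charpoly_diagonal (v : ι → ℂ) :
    (Matrix.diagonal v).charpoly = ∏ i, (X - C (v i)) := by
  have : charmatrix (Matrix.diagonal v) = Matrix.diagonal fun i => X - C (v i) := by
    ext i j
    by_cases h : i = j
    · subst h; simp
    · simp [charmatrix_apply_ne _ _ _ h, Matrix.diagonal_apply_ne _ h]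
  rw [Matrix.charpoly, this, det_diagonal]

lemma roots_charpoly_hermitian (A : Matrix ι ι ℂ) (hA : A.IsHermitian) :
    A.charpoly.roots = Finset.univ.val.map fun i => ((hA.eigenvalues i : ℝ) : ℂ) := by
  have h1 : A.charpoly = (Matrix.diagonal (RCLike.ofReal ∘ hA.eigenvalues : ι → ℂ)).charpoly := by
    conv_lhs => rw [hA.spectral_theorem]
    exact charpoly_unitary_conj hA.eigenvectorUnitary _
  rw [h1, _root_.charpoly_diagonal]
  have : ∏ i, (X - C ((RCLike.ofReal ∘ hA.eigenvalues : ι → ℂ) i))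
      = ((Finset.univ.val.map fun i => ((hA.eigenvalues i : ℝ) : ℂ)).map fun a => X - C a).prod := by
    rw [Finset.prod, Multiset.map_map]
    rfl
  rw [this, roots_multiset_prod_X_sub_C]


lemma exists_sorted_enum (A : Matrix ι ι ℂ) (hA : A.IsHermitian) :
    ∃ m : Fin (Fintype.card ι) → ι, Function.Bijective m ∧
      Monotone (fun k => hA.eigenvalues (m k)) ∧
      ∀ (j : ℕ) (hj : j < Fintype.card ι), eig A j = hA.eigenvalues (m ⟨j, hj⟩) := by
  classical
  set n := Fintype.card ι
  set e0 : Fin n ≃ ι := (Fintype.equivFin ι).symm with he0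
  set g : Fin n → ℝ := hA.eigenvalues ∘ e0 with hg
  set σ : Equiv.Perm (Fin n) := Tuple.sort g with hσ
  refine ⟨e0 ∘ σ, (e0.bijective).comp σ.bijective, Tuple.monotone_sort g, ?_⟩
  intro j hj
  have hroots : A.charpoly.roots.map Complex.re = Finset.univ.val.map hA.eigenvalues := by
    rw [roots_charpoly_hermitian A hA, Multiset.map_map]
    rfl
  have hmult : Finset.univ.val.map hA.eigenvalues = ↑(List.ofFn (g ∘ σ)) := by
    have h1 : Finset.univ.val.map (g ∘ σ) = ↑(List.ofFn (g ∘ σ)) := Fin.univ_val_map _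
    rw [← h1]
    have h2 : (Finset.univ.val : Multiset (Fin n)).map σ = Finset.univ.val := by
      have := Finset.map_univ_equiv σ
      calc (Finset.univ.val : Multiset (Fin n)).map σ
          = (Finset.univ.map σ.toEmbedding).val := rfl
        _ = Finset.univ.val := by rw [Finset.map_univ_equiv]
    have h3 : (Finset.univ.val : Multiset (Fin n)).map e0 = Finset.univ.val := by
      calc (Finset.univ.val : Multiset (Fin n)).map e0
          = (Finset.univ.map e0.toEmbedding).val := rfl
        _ = Finset.univ.val := by rw [Finset.map_univ_equiv]
    calc Finset.univ.val.map hA.eigenvalues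
        = ((Finset.univ.val : Multiset (Fin n)).map e0).map hA.eigenvalues := by rw [h3]
      _ = (Finset.univ.val : Multiset (Fin n)).map g := by rw [Multiset.map_map]
      _ = ((Finset.univ.val : Multiset (Fin n)).map σ).map g := by rw [h2]
      _ = Finset.univ.val.map (g ∘ σ) := by rw [Multiset.map_map]
  have hsorteq : (Finset.univ.val.map hA.eigenvalues).sort (· ≤ ·) = List.ofFn (g ∘ σ) := by
    refine (fun h1 h2 => List.Perm.eq_of_pairwise' (r := (· ≤ ·)) (Multiset.pairwise_sort _ _) h2 h1) ?_ ?_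
    · apply Multiset.coe_eq_coe.mp
      rw [Multiset.sort_eq, hmult]
    · rw [List.pairwise_ofFn]
      intro a b hab
      exact Tuple.monotone_sort g hab.le
  have hlen : ((Finset.univ.val.map hA.eigenvalues).sort (· ≤ ·)).length = n := by
    rw [Multiset.length_sort, Multiset.card_map]; rfl
  rw [eig, hroots, hsorteq]
  rw [List.getD_eq_getElem _ _ (by rw [List.length_ofFn]; exact hj), List.getElem_ofFn]
  rfl

open scoped InnerProductSpace ComplexOrder in
lemma repr_zero_of_span {E : Type*} [NormedAddCommGroup E] [InnerProductSpace ℂ E]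
    (b : OrthonormalBasis ι ℂ E) (s : Set ι) {w : E}
    (hw : w ∈ Submodule.span ℂ (b '' s)) {i : ι} (hi : i ∉ s) : b.repr w i = 0 := by
  have hker : Submodule.span ℂ (b '' s) ≤ LinearMap.ker (innerSL ℂ (b i)).toLinearMap := by
    rw [Submodule.span_le]
    rintro x ⟨k, hk, rfl⟩
    have hik : i ≠ k := fun h => hi (h ▸ hk)
    simpa [LinearMap.mem_ker] using b.orthonormal.2 hik
  have h := hker hw
  rw [LinearMap.mem_ker] at h
  rw [b.repr_apply_apply]
  simpa using h

open scoped InnerProductSpace in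
lemma rayleigh_eq (A : Matrix ι ι ℂ) (hA : A.IsHermitian) (w : EuclideanSpace ℂ ι) :
    (dotProduct (star (w : ι → ℂ)) (A *ᵥ w)).re
      = ∑ i, hA.eigenvalues i * Complex.normSq (hA.eigenvectorBasis.repr w i) := by
  set u := hA.eigenvectorBasis with hu
  set z : EuclideanSpace ℂ ι := WithLp.toLp 2 (A *ᵥ w) with hz
  have h1 : dotProduct (star (w : ι → ℂ)) (A *ᵥ w) = ⟪w, z⟫_ℂ :=
    by rw [EuclideanSpace.inner_eq_star_dotProduct, dotProduct_comm]
  have h3 : ∀ i, u.repr z i = (hA.eigenvalues i : ℂ) * u.repr w i := by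
    intro i
    rw [u.repr_apply_apply, u.repr_apply_apply]
    rw [EuclideanSpace.inner_eq_star_dotProduct, EuclideanSpace.inner_eq_star_dotProduct,
      dotProduct_comm, dotProduct_comm (WithLp.ofLp w)]
    show dotProduct (star (⇑(u i))) (A *ᵥ w) = _ * dotProduct (star (⇑(u i))) w
    rw [dotProduct_mulVec]
    have hstar : star (⇑(u i)) ᵥ* A = star (A *ᵥ ⇑(u i)) := by
      rw [Matrix.star_mulVec, hA.eq]
    rw [hstar, hA.mulVec_eigenvectorBasis]
    have : star (hA.eigenvalues i • ⇑(u i)) = hA.eigenvalues i • star (⇑(u i)) := by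
      ext l
      simp [Pi.smul_apply, Complex.real_smul, Pi.star_apply, _root_.map_mul]
    rw [this, smul_dotProduct]
    simp [Complex.real_smul]
  have h2 : ⟪w, z⟫_ℂ = ∑ i, (starRingEnd ℂ) (u.repr w i) * u.repr z i := by
    rw [← u.repr.inner_map_map w z]
    rw [PiLp.inner_apply]
    refine Finset.sum_congr rfl fun i _ => ?_
    rw [RCLike.inner_apply]
    ring
  rw [h1, h2]
  rw [Complex.re_sum]
  congr 1
  ext i
  rw [h3 i]
  have : (starRingEnd ℂ) (u.repr w i) * ((hA.eigenvalues i : ℂ) * u.repr w i)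
      = (hA.eigenvalues i : ℂ) * ((starRingEnd ℂ) (u.repr w i) * u.repr w i) := by ring
  rw [this, ← Complex.normSq_eq_conj_mul_self]
  rw [← Complex.ofReal_mul]
  exact Complex.ofReal_re _

lemma norm_sq_eq_sum_repr (A : Matrix ι ι ℂ) (hA : A.IsHermitian) (w : EuclideanSpace ℂ ι) :
    ‖w‖ ^ 2 = ∑ i, Complex.normSq (hA.eigenvectorBasis.repr w i) := by
  rw [← (hA.eigenvectorBasis.repr).norm_map w]
  rw [EuclideanSpace.norm_eq]
  rw [Real.sq_sqrt (by positivity)]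
  congr 1
  ext i
  rw [← Complex.sq_norm]

lemma rayleigh_le_of_span (A : Matrix ι ι ℂ) (hA : A.IsHermitian) (s : Set ι) (c : ℝ)
    (hc : ∀ i ∈ s, hA.eigenvalues i ≤ c) (w : EuclideanSpace ℂ ι)
    (hw : w ∈ Submodule.span ℂ (hA.eigenvectorBasis '' s)) :
    (dotProduct (star (w : ι → ℂ)) (A *ᵥ w)).re ≤ c * ‖w‖ ^ 2 := by
  rw [rayleigh_eq A hA w, norm_sq_eq_sum_repr A hA w, Finset.mul_sum]
  apply Finset.sum_le_sum
  intro i _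
  by_cases his : i ∈ s
  · exact mul_le_mul_of_nonneg_right (hc i his) (Complex.normSq_nonneg _)
  · rw [repr_zero_of_span hA.eigenvectorBasis s hw his]
    simp

lemma rayleigh_ge_of_span (A : Matrix ι ι ℂ) (hA : A.IsHermitian) (s : Set ι) (c : ℝ)
    (hc : ∀ i ∈ s, c ≤ hA.eigenvalues i) (w : EuclideanSpace ℂ ι)
    (hw : w ∈ Submodule.span ℂ (hA.eigenvectorBasis '' s)) :
    c * ‖w‖ ^ 2 ≤ (dotProduct (star (w : ι → ℂ)) (A *ᵥ w)).re := by
  rw [rayleigh_eq A hA w, norm_sq_eq_sum_repr A hA w, Finset.mul_sum]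
  apply Finset.sum_le_sum
  intro i _
  by_cases his : i ∈ s
  · exact mul_le_mul_of_nonneg_right (hc i his) (Complex.normSq_nonneg _)
  · rw [repr_zero_of_span hA.eigenvectorBasis s hw his]
    simp

lemma finrank_span_basis_image {E : Type*} [NormedAddCommGroup E] [InnerProductSpace ℂ E]
    (b : OrthonormalBasis ι ℂ E) {κ : Type*} [Fintype κ] (f : κ → ι) (hf : Function.Injective f) :
    Module.finrank ℂ (Submodule.span ℂ (b '' (Set.range f))) = Fintype.card κ := by
  have horth : Orthonormal ℂ (⇑b ∘ f) := b.orthonormal.comp f hf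
  have hli := horth.linearIndependent
  have : ⇑b '' Set.range f = Set.range (⇑b ∘ f) := by
    rw [Set.range_comp]
  rw [this]
  exact finrank_span_eq_card hli

lemma eig_weyl (A B : Matrix ι ι ℂ) (hA : A.IsHermitian) (hB : B.IsHermitian) (ε : ℝ)
    (hdiff : ∀ w : EuclideanSpace ℂ ι,
      (dotProduct (star (w : ι → ℂ)) ((B - A) *ᵥ w)).re ≤ ε * ‖w‖ ^ 2)
    (j : ℕ) (hj : j < Fintype.card ι) : eig B j ≤ eig A j + ε := by
  classical
  set n := Fintype.card ι with hn
  obtain ⟨mA, hmAbij, hmAmono, hmAeig⟩ := exists_sorted_enum A hA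
  obtain ⟨mB, hmBbij, hmBmono, hmBeig⟩ := exists_sorted_enum B hB
  set jF : Fin n := ⟨j, hj⟩ with hjF
  set S := Submodule.span ℂ (hA.eigenvectorBasis '' (mA '' Set.Iic jF)) with hS
  set T := Submodule.span ℂ (hB.eigenvectorBasis '' (mB '' Set.Ici jF)) with hT
  have hrankS : Module.finrank ℂ S = j + 1 := by
    have : mA '' Set.Iic jF = Set.range fun k : Set.Iic jF => mA k :=
      Set.image_eq_range _ _
    rw [hS, this, finrank_span_basis_image hA.eigenvectorBasis (fun k : Set.Iic jF => mA k)
      (fun a b h => Subtype.ext (hmAbij.injective h)), Fintype.card_Iic, Fin.card_Iic]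
  have hrankT : Module.finrank ℂ T = n - j := by
    have : mB '' Set.Ici jF = Set.range fun k : Set.Ici jF => mB k :=
      Set.image_eq_range _ _
    rw [hT, this, finrank_span_basis_image hB.eigenvectorBasis (fun k : Set.Ici jF => mB k)
      (fun a b h => Subtype.ext (hmBbij.injective h)), Fintype.card_Ici, Fin.card_Ici]
  -- dimension count gives a nonzero vector in S ⊓ T
  have hsum := Submodule.finrank_sup_add_finrank_inf_eq S T
  have hle : Module.finrank ℂ ↥(S ⊔ T) ≤ n := by
    have := Submodule.finrank_le (S ⊔ T)
    simpa [finrank_euclideanSpace] using this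
  have hpos : 0 < Module.finrank ℂ ↥(S ⊓ T) := by
    rw [hrankS, hrankT] at hsum
    omega
  have hne : S ⊓ T ≠ ⊥ := by
    intro h
    rw [h, finrank_bot] at hpos
    exact lt_irrefl 0 hpos
  obtain ⟨w, hwST, hw0⟩ := Submodule.ne_bot_iff _ |>.mp hne
  have hwS : w ∈ S := hwST.1
  have hwT : w ∈ T := hwST.2
  have hnw : (0:ℝ) < ‖w‖ ^ 2 := pow_pos (norm_pos_iff.mpr hw0) 2
  -- Rayleigh bounds
  have hA_bound : (dotProduct (star (w : ι → ℂ)) (A *ᵥ w)).re ≤ eig A j * ‖w‖ ^ 2 := by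
    apply rayleigh_le_of_span A hA _ _ _ w hwS
    rintro i ⟨k, hk, rfl⟩
    rw [hmAeig j hj]
    exact hmAmono hk
  have hB_bound : eig B j * ‖w‖ ^ 2 ≤ (dotProduct (star (w : ι → ℂ)) (B *ᵥ w)).re := by
    apply rayleigh_ge_of_span B hB _ _ _ w hwT
    rintro i ⟨k, hk, rfl⟩
    rw [hmBeig j hj]
    exact hmBmono hk
  have hsplit : (dotProduct (star (w : ι → ℂ)) (B *ᵥ w)).re
      = (dotProduct (star (w : ι → ℂ)) (A *ᵥ w)).re
        + (dotProduct (star (w : ι → ℂ)) ((B - A) *ᵥ w)).re := by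
    have hBv : B *ᵥ (w : ι → ℂ) = A *ᵥ (w : ι → ℂ) + (B - A) *ᵥ (w : ι → ℂ) := by
      rw [Matrix.sub_mulVec]
      abel
    rw [hBv, dotProduct_add, Complex.add_re]
  have : eig B j * ‖w‖ ^ 2 ≤ (eig A j + ε) * ‖w‖ ^ 2 := by
    calc eig B j * ‖w‖ ^ 2 ≤ _ := hB_bound
      _ = _ := hsplit
      _ ≤ eig A j * ‖w‖ ^ 2 + ε * ‖w‖ ^ 2 := add_le_add hA_bound (hdiff w)
      _ = (eig A j + ε) * ‖w‖ ^ 2 := by ring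
  exact le_of_mul_le_mul_right (by simpa [mul_comm] using this) hnw


section Floquet

variable {d : ℕ} {p : Fin d → ℕ} (hp : ∀ j, 0 < p j) (V : (Fin d → ℤ) → ℝ)

lemma exp_term_eq (hp : ∀ j, 0 < p j) (k n : ∀ j, Fin (p j)) :
    Complex.exp ((2 * Real.pi * Complex.I) *
        ∑ j, ((((-k) j : ℕ) : ℂ) / (p j : ℂ)) * (((n j : ℕ) : ℂ) + 1))
      = Complex.exp (-(2 * Real.pi * Complex.I) *
        ∑ j, (((k j : ℕ) : ℂ) / (p j : ℂ)) * (((n j : ℕ) : ℂ) + 1)) := by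
  haveI : ∀ j, NeZero (p j) := fun j => ⟨(hp j).ne'⟩
  rw [Complex.exp_eq_exp_iff_exp_sub_eq_one]
  set N : ℕ := ∑ j, (if (k j : ℕ) = 0 then 0 else ((n j : ℕ) + 1)) with hN
  have key : (2 * Real.pi * Complex.I) *
        (∑ j, ((((-k) j : ℕ) : ℂ) / (p j : ℂ)) * (((n j : ℕ) : ℂ) + 1))
      - (-(2 * Real.pi * Complex.I)) *
        (∑ j, (((k j : ℕ) : ℂ) / (p j : ℂ)) * (((n j : ℕ) : ℂ) + 1))
      = (N : ℂ) * (2 * Real.pi * Complex.I) := by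
    have hsum : (∑ j, ((((-k) j : ℕ) : ℂ) / (p j : ℂ)) * (((n j : ℕ) : ℂ) + 1))
        + (∑ j, (((k j : ℕ) : ℂ) / (p j : ℂ)) * (((n j : ℕ) : ℂ) + 1)) = (N : ℂ) := by
      rw [← Finset.sum_add_distrib, hN, Nat.cast_sum]
      apply Finset.sum_congr rfl
      intro j _
      have hlt : (k j : ℕ) < p j := (k j).isLt
      have hpc : ((p j : ℕ) : ℂ) ≠ 0 := Nat.cast_ne_zero.mpr (hp j).ne'
      by_cases h0 : (k j : ℕ) = 0
      · have : (((-k) j : Fin (p j)) : ℕ) = 0 := by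
          show ((-(k j) : Fin (p j)) : ℕ) = 0
          rw [Fin.coe_neg, h0, Nat.sub_zero, Nat.mod_self]
        rw [this, h0]
        simp
      · have hneg : (((-k) j : Fin (p j)) : ℕ) = p j - (k j : ℕ) := by
          show ((-(k j) : Fin (p j)) : ℕ) = p j - (k j : ℕ)
          rw [Fin.coe_neg, Nat.mod_eq_of_lt (by omega)]
        rw [hneg, if_neg h0]
        have hc : ((p j - (k j : ℕ) : ℕ) : ℂ) = (p j : ℂ) - ((k j : ℕ) : ℂ) := by
          push_cast [Nat.cast_sub hlt.le]
          ring
        rw [hc]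
        push_cast
        field_simp
        ring
    calc (2 * Real.pi * Complex.I) * (∑ j, ((((-k) j : ℕ) : ℂ) / (p j : ℂ)) * (((n j : ℕ) : ℂ) + 1))
        - (-(2 * Real.pi * Complex.I)) * (∑ j, (((k j : ℕ) : ℂ) / (p j : ℂ)) * (((n j : ℕ) : ℂ) + 1))
        = (2 * Real.pi * Complex.I) * ((∑ j, ((((-k) j : ℕ) : ℂ) / (p j : ℂ)) * (((n j : ℕ) : ℂ) + 1))
            + (∑ j, (((k j : ℕ) : ℂ) / (p j : ℂ)) * (((n j : ℕ) : ℂ) + 1))) := by ring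
      _ = (N : ℂ) * (2 * Real.pi * Complex.I) := by rw [hsum]; ring
  rw [key, Complex.exp_eq_one_iff]
  exact ⟨(N : ℤ), by push_cast; ring⟩

lemma Vhat_conj (hp : ∀ j, 0 < p j) (k : ∀ j, Fin (p j)) :
    (starRingEnd ℂ) (Vhat p V (-k)) = Vhat p V k := by
  have h2 : (starRingEnd ℂ) (-(2 * Real.pi * Complex.I)) = 2 * Real.pi * Complex.I := by
    rw [map_neg, _root_.map_mul, _root_.map_mul, Complex.conj_I, Complex.conj_ofReal, map_ofNat]
    ring
  rw [Vhat, Vhat, _root_.map_mul, map_inv₀, map_sum]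
  congr 1
  · rw [map_prod]
    exact congrArg Inv.inv (Finset.prod_congr rfl fun j _ => Complex.conj_natCast _)
  · apply Finset.sum_congr rfl
    intro n _
    rw [_root_.map_mul, Complex.conj_ofReal]
    congr 1
    rw [← Complex.exp_conj, _root_.map_mul, h2, map_sum]
    rw [show (∑ j, (starRingEnd ℂ) (((((-k) j : ℕ) : ℂ) / (p j : ℂ)) * (((n j : ℕ) : ℂ) + 1)))
      = ∑ j, ((((-k) j : ℕ) : ℂ) / (p j : ℂ)) * (((n j : ℕ) : ℂ) + 1) from ?_]
    · exact exp_term_eq hp k n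
    · apply Finset.sum_congr rfl
      intro j _
      rw [_root_.map_mul, map_div₀, _root_.map_add, _root_.map_one]
      simp [Complex.conj_natCast]

end Floquet

section Floquet2

variable {d : ℕ} {p : Fin d → ℕ}

lemma diag_real (θ : Fin d → ℝ) (l : ∀ j, Fin (p j)) :
    (∑ j, 2 * Complex.cos (2 * Real.pi * (((l j : ℕ) : ℂ) / (p j : ℂ) + ((θ j : ℝ) : ℂ))))
      = (((∑ j, 2 * Real.cos (2 * Real.pi * (((l j : ℕ) : ℝ) / (p j : ℝ) + θ j)) : ℝ)) : ℂ) := by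
  push_cast [← Complex.ofReal_cos]
  norm_num

lemma floquet_isHermitian (hp : ∀ j, 0 < p j) (V : (Fin d → ℤ) → ℝ) (θ : Fin d → ℝ) :
    (floquet p V (fun i => ((θ i : ℝ) : ℂ))).IsHermitian := by
  haveI : ∀ j, NeZero (p j) := fun j => ⟨(hp j).ne'⟩
  show _ᴴ = _
  ext l m
  rw [Matrix.conjTranspose_apply]
  show star (floquet p V (fun i => ((θ i : ℝ) : ℂ)) m l) = floquet p V (fun i => ((θ i : ℝ) : ℂ)) l m
  rw [floquet, floquet]
  show (starRingEnd ℂ) _ = _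
  rw [_root_.map_add]
  have e1 : (starRingEnd ℂ)
      (if m = l then ∑ j, 2 * Complex.cos (2 * Real.pi * (((m j : ℕ) : ℂ) / (p j : ℂ) + ((θ j : ℝ) : ℂ))) else 0)
      = (if l = m then ∑ j, 2 * Complex.cos (2 * Real.pi * (((l j : ℕ) : ℂ) / (p j : ℂ) + ((θ j : ℝ) : ℂ))) else 0) := by
    by_cases h : l = m
    · subst h
      rw [diag_real, apply_ite (starRingEnd ℂ), Complex.conj_ofReal, map_zero]
    · rw [if_neg (fun hh => h hh.symm), if_neg h, map_zero]
  have hml : m - l = -(l - m) := by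
    funext j
    show m j - l j = -(l j - m j)
    rw [neg_sub]
  have e2 : (starRingEnd ℂ) (Vhat p V (m - l)) = Vhat p V (l - m) := by
    rw [hml]
    exact Vhat_conj V hp (l - m)
  rw [e1, e2]

lemma floquet_sub_eq_diagonal (V : (Fin d → ℤ) → ℝ) (θ θ' : Fin d → ℝ) :
    floquet p V (fun i => ((θ i : ℝ) : ℂ)) - floquet p V (fun i => ((θ' i : ℝ) : ℂ))
      = Matrix.diagonal (fun l => (((∑ j, (2 * Real.cos (2 * Real.pi * (((l j : ℕ) : ℝ) / (p j : ℝ) + θ j))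
          - 2 * Real.cos (2 * Real.pi * (((l j : ℕ) : ℝ) / (p j : ℝ) + θ' j))) : ℝ)) : ℂ)) := by
  ext l m
  rw [Matrix.sub_apply, floquet, floquet]
  by_cases h : l = m
  · subst h
    rw [Matrix.diagonal_apply_eq, if_pos rfl, if_pos rfl, add_sub_add_right_eq_sub,
      diag_real, diag_real, ← Complex.ofReal_sub, ← Finset.sum_sub_distrib]
  · rw [Matrix.diagonal_apply_ne _ h, if_neg h, if_neg h]
    ring

lemma abs_cos_sub_cos_le (x y : ℝ) : |Real.cos x - Real.cos y| ≤ |x - y| := by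
  rw [Real.cos_sub_cos, abs_mul, abs_mul]
  have h2 : |Real.sin ((x + y) / 2)| ≤ 1 := abs_le.mpr ⟨Real.neg_one_le_sin _, Real.sin_le_one _⟩
  have h3 : |Real.sin ((x - y) / 2)| ≤ |x - y| / 2 := by
    calc |Real.sin ((x - y) / 2)| ≤ |(x - y) / 2| := Real.abs_sin_le_abs
      _ = |x - y| / 2 := by rw [abs_div]; norm_num
  calc |(-2 : ℝ)| * |Real.sin ((x+y)/2)| * |Real.sin ((x-y)/2)|
      = 2 * (|Real.sin ((x+y)/2)| * |Real.sin ((x-y)/2)|) := by rw [abs_neg, abs_two]; ring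
    _ ≤ 2 * (1 * (|x - y| / 2)) := by
        apply mul_le_mul_of_nonneg_left _ (by norm_num)
        exact mul_le_mul h2 h3 (abs_nonneg _) zero_le_one
    _ = |x - y| := by ring

end Floquet2

lemma euclidean_norm_sq {κ : Type*} [Fintype κ] (w : EuclideanSpace ℂ κ) :
    ‖w‖ ^ 2 = ∑ i, Complex.normSq (w i) := by
  rw [EuclideanSpace.norm_eq, Real.sq_sqrt (by positivity)]
  exact Finset.sum_congr rfl fun i _ => by rw [← Complex.sq_norm]


section Final

variable {d : ℕ} {p : Fin d → ℕ}

lemma diag_quadform_bound {κ : Type*} [Fintype κ] [DecidableEq κ] (ρ : κ → ℝ) (ε : ℝ)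
    (hb : ∀ l, ρ l ≤ ε) (v : κ → ℂ) :
    (dotProduct (star v) (Matrix.diagonal (fun l => ((ρ l : ℝ) : ℂ)) *ᵥ v)).re
      ≤ ε * ∑ l, Complex.normSq (v l) := by
  rw [dotProduct, Complex.re_sum]
  have hterm : ∀ l, (star v l * ((Matrix.diagonal (fun l => ((ρ l : ℝ) : ℂ)) *ᵥ v) l)).re
      = ρ l * Complex.normSq (v l) := by
    intro l
    rw [Matrix.mulVec_diagonal]
    have : star v l * (((ρ l : ℝ) : ℂ) * v l)
        = ((ρ l : ℝ) : ℂ) * ((starRingEnd ℂ) (v l) * v l) := by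
      show (starRingEnd ℂ) (v l) * _ = _
      ring
    rw [this, ← Complex.normSq_eq_conj_mul_self, ← Complex.ofReal_mul]
    exact Complex.ofReal_re _
  calc ∑ l, (star v l * ((Matrix.diagonal (fun l => ((ρ l : ℝ) : ℂ)) *ᵥ v) l)).re
      = ∑ l, ρ l * Complex.normSq (v l) := Finset.sum_congr rfl fun l _ => hterm l
    _ ≤ ∑ l, ε * Complex.normSq (v l) := Finset.sum_le_sum fun l _ =>
        mul_le_mul_of_nonneg_right (hb l) (Complex.normSq_nonneg _)
    _ = ε * ∑ l, Complex.normSq (v l) := by rw [← Finset.mul_sum]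

lemma efun_lip (hp : ∀ j, 0 < p j) (V : (Fin d → ℤ) → ℝ) {θ θ' : Fin d → ℝ}
    (hθ : θ ∈ Vset p) (hθ' : θ' ∈ Vset p) (j : ℕ) (hj : j < ∏ i, p i) :
    Efun p V j θ ≤ Efun p V j θ' + 4 * Real.pi * ∑ i, 1 / (p i : ℝ) := by
  set ε := 4 * Real.pi * ∑ i, 1 / (p i : ℝ) with hε
  have hcard : j < Fintype.card (∀ i, Fin (p i)) := by
    rw [Fintype.card_pi]
    simpa using hj
  set ρ : (∀ i, Fin (p i)) → ℝ := fun l =>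
    ∑ i, (2 * Real.cos (2 * Real.pi * (((l i : ℕ) : ℝ) / (p i : ℝ) + θ i))
      - 2 * Real.cos (2 * Real.pi * (((l i : ℕ) : ℝ) / (p i : ℝ) + θ' i))) with hρ
  have hρbound : ∀ l, ρ l ≤ ε := by
    intro l
    rw [hρ, hε, Finset.mul_sum]
    apply Finset.sum_le_sum
    intro i _
    have h1 : |θ i - θ' i| ≤ 1 / (p i : ℝ) := by
      have := (hθ i)
      have := (hθ' i)
      rw [abs_sub_le_iff]
      constructor
      · linarith [(hθ i).1, (hθ i).2, (hθ' i).1, (hθ' i).2]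
      · linarith [(hθ i).1, (hθ i).2, (hθ' i).1, (hθ' i).2]
    have h2 := abs_cos_sub_cos_le (2 * Real.pi * (((l i : ℕ) : ℝ) / (p i : ℝ) + θ i))
      (2 * Real.pi * (((l i : ℕ) : ℝ) / (p i : ℝ) + θ' i))
    have h3 : |2 * Real.pi * (((l i : ℕ) : ℝ) / (p i : ℝ) + θ i)
        - 2 * Real.pi * (((l i : ℕ) : ℝ) / (p i : ℝ) + θ' i)| = 2 * Real.pi * |θ i - θ' i| := by
      rw [show 2 * Real.pi * (((l i : ℕ) : ℝ) / (p i : ℝ) + θ i)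
        - 2 * Real.pi * (((l i : ℕ) : ℝ) / (p i : ℝ) + θ' i) = 2 * Real.pi * (θ i - θ' i) by ring]
      rw [abs_mul, abs_of_pos (by positivity)]
    have hpi := Real.pi_pos
    calc 2 * Real.cos (2 * Real.pi * (((l i : ℕ) : ℝ) / (p i : ℝ) + θ i))
          - 2 * Real.cos (2 * Real.pi * (((l i : ℕ) : ℝ) / (p i : ℝ) + θ' i))
        = 2 * (Real.cos (2 * Real.pi * (((l i : ℕ) : ℝ) / (p i : ℝ) + θ i))
          - Real.cos (2 * Real.pi * (((l i : ℕ) : ℝ) / (p i : ℝ) + θ' i))) := by ring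
      _ ≤ 2 * |Real.cos (2 * Real.pi * (((l i : ℕ) : ℝ) / (p i : ℝ) + θ i))
          - Real.cos (2 * Real.pi * (((l i : ℕ) : ℝ) / (p i : ℝ) + θ' i))| := by
          have := le_abs_self (Real.cos (2 * Real.pi * (((l i : ℕ) : ℝ) / (p i : ℝ) + θ i))
            - Real.cos (2 * Real.pi * (((l i : ℕ) : ℝ) / (p i : ℝ) + θ' i)))
          linarith
      _ ≤ 2 * (2 * Real.pi * |θ i - θ' i|) := by rw [← h3]; linarith
      _ ≤ 2 * (2 * Real.pi * (1 / (p i : ℝ))) := by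
          have : 2 * Real.pi * |θ i - θ' i| ≤ 2 * Real.pi * (1 / (p i : ℝ)) :=
            mul_le_mul_of_nonneg_left h1 (by positivity)
          linarith
      _ = 4 * Real.pi * (1 / (p i : ℝ)) := by ring
  apply eig_weyl (floquet p V fun i => ((θ' i : ℝ) : ℂ)) (floquet p V fun i => ((θ i : ℝ) : ℂ))
    (floquet_isHermitian hp V θ') (floquet_isHermitian hp V θ) ε ?_ j hcard
  intro w
  rw [floquet_sub_eq_diagonal V θ θ', euclidean_norm_sq w]
  exact diag_quadform_bound ρ ε hρbound w


end Final
end AuxWeyl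

/-- **Bound on the length of the bands.** For `p`-periodic `V` and `0 ≤ j < P`, the length
of the `j`-th band satisfies `E_j^+ − E_j^− ≤ 4π Σ_i 1/p_i`. -/
theorem stmt9 {d : ℕ} (hd : 1 ≤ d) (p : Fin d → ℕ) (hp : ∀ j, 0 < p j)
    (V : (Fin d → ℤ) → ℝ) (hV : IsPeriodic p V)
    (j : ℕ) (hj : j < ∏ i, p i) :
    Eplus p V j - Eminus p V j ≤ 4 * Real.pi * ∑ i, 1 / (p i : ℝ) := by
  have h0 : (fun _ => (0:ℝ)) ∈ Vset p := by
    refine fun i => ⟨le_refl 0, ?_⟩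
    show (0:ℝ) < 1 / (p i : ℝ)
    have := hp i
    positivity
  have hne : (Efun p V j '' Vset p).Nonempty := ⟨_, Set.mem_image_of_mem _ h0⟩
  have key : ∀ a ∈ Efun p V j '' Vset p, ∀ b ∈ Efun p V j '' Vset p,
      a ≤ b + 4 * Real.pi * ∑ i, 1 / (p i : ℝ) := by
    rintro a ⟨θ, hθ, rfl⟩ b ⟨θ', hθ', rfl⟩
    exact efun_lip hp V hθ hθ' j hj
  rw [Eplus, Eminus, sub_le_iff_le_add]
  apply csSup_le hne
  intro a ha
  rw [add_comm, ← sub_le_iff_le_add]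
  apply le_csInf hne
  intro b hb
  rw [sub_le_iff_le_add]
  exact key a ha b hb

end
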